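/- arXiv:1211.2068 — 5 statements merged into one kernel-verified Lean document; each statement's English description precedes it below -/
import Mathlib

section
/- Fix real parameters θ and γ with 0 < θ < 1 and 1 < γ < (1+θ)²/(4θ), and let U(x) = −x²/2 + θx³/3 + γx − γ·ln(x+1) on (−1, ∞). Then U has a strict local minimum at x₁ = 0, a strict local maximum at x₂ = (1−θ−√((1+θ)²−4γθ))/(2θ), and a strict local minimum at x₃ = (1−θ+√((1+θ)²−4γθ))/(2θ). In other words, the potential of the tumor growth model is bistable, with minima at the tumor-free state x₁ and the stable tumor state x₃ and a maximum at the unstable state x₂. -/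
/-!
`U'(x) = (θx³ + (θ - 1)x² + (γ - 1)x)/(x + 1) = θ x (x - x₂)(x - x₃)/(x + 1)` on `(-1, ∞)`,
where `x₂ < x₃` are the roots of `θx² + (θ - 1)x + (γ - 1)`. In the given parameter regime the
discriminant `(1 + θ)² - 4γθ` is positive and both roots are positive, so `U'` changes sign
from `-` to `+` at `0`, from `+` to `-` at `x₂` and from `-` to `+` at `x₃`, and the strict
first-derivative test applies at each point.
-/

open Filter Topology Set

theorem eventually_nhdsNE_lt_of_hasDerivAt {f f' : ℝ → ℝ} {a b c : ℝ} (hac : a < c)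
    (hcb : c < b) (hf : ∀ x ∈ Icc a b, HasDerivAt f (f' x) x)
    (hneg : ∀ x ∈ Ioo a c, f' x < 0) (hpos : ∀ x ∈ Ioo c b, 0 < f' x) :
    ∀ᶠ x in 𝓝[≠] c, f c < f x := by
  have hcont : ContinuousOn f (Icc a b) := fun x hx => (hf x hx).continuousAt.continuousWithinAt
  have hderiv : ∀ x ∈ Ioo a b, deriv f x = f' x := fun x hx =>
    (hf x (Ioo_subset_Icc_self hx)).deriv
  have hanti : StrictAntiOn f (Icc a c) := by
    refine strictAntiOn_of_deriv_neg (convex_Icc a c)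
      (hcont.mono (Icc_subset_Icc_right hcb.le)) fun x hx => ?_
    rw [interior_Icc] at hx
    rw [hderiv x ⟨hx.1, hx.2.trans hcb⟩]
    exact hneg x hx
  have hmono : StrictMonoOn f (Icc c b) := by
    refine strictMonoOn_of_deriv_pos (convex_Icc c b)
      (hcont.mono (Icc_subset_Icc_left hac.le)) fun x hx => ?_
    rw [interior_Icc] at hx
    rw [hderiv x ⟨hac.trans hx.1, hx.2⟩]
    exact hpos x hx
  filter_upwards [self_mem_nhdsWithin, mem_nhdsWithin_of_mem_nhds (Ioo_mem_nhds hac hcb)]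
    with x (hxc : x ≠ c) hx
  rcases hxc.lt_or_gt with hlt | hgt
  · exact hanti ⟨hx.1.le, hlt.le⟩ ⟨hac.le, le_rfl⟩ hlt
  · exact hmono ⟨le_rfl, hcb.le⟩ ⟨hgt.le, hx.2.le⟩ hgt

theorem eventually_nhdsNE_gt_of_hasDerivAt {f f' : ℝ → ℝ} {a b c : ℝ} (hac : a < c)
    (hcb : c < b) (hf : ∀ x ∈ Icc a b, HasDerivAt f (f' x) x)
    (hpos : ∀ x ∈ Ioo a c, 0 < f' x) (hneg : ∀ x ∈ Ioo c b, f' x < 0) :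
    ∀ᶠ x in 𝓝[≠] c, f x < f c := by
  have := eventually_nhdsNE_lt_of_hasDerivAt (f := -f) (f' := -f') hac hcb
    (fun x hx => (hf x hx).neg) (fun x hx => neg_neg_of_pos (hpos x hx))
    (fun x hx => neg_pos_of_neg (hneg x hx))
  simpa only [Pi.neg_apply, neg_lt_neg_iff] using this

noncomputable def tumorPotential (θ γ x : ℝ) : ℝ :=
  -x ^ 2 / 2 + θ * x ^ 3 / 3 + γ * x - γ * Real.log (x + 1)

section Roots

variable {θ γ a b : ℝ}

theorem hasDerivAt_tumorPotential (hsum : θ * (a + b) = 1 - θ) (hprod : θ * (a * b) = γ - 1)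
    {x : ℝ} (hx : -1 < x) :
    HasDerivAt (tumorPotential θ γ) (θ * x * (x - a) * (x - b) / (x + 1)) x := by
  have hx1 : x + 1 ≠ 0 := by linarith
  have hlog : HasDerivAt (fun y : ℝ => Real.log (y + 1)) (1 / (x + 1)) x := by
    simpa [one_div] using ((hasDerivAt_id x).add_const 1).log hx1
  have h := (((((hasDerivAt_pow 2 x).neg).div_const 2).add
    (((hasDerivAt_pow 3 x).const_mul θ).div_const 3)).add
    ((hasDerivAt_id x).const_mul γ)).sub (hlog.const_mul γ)
  refine h.congr_deriv ?_
  push_cast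
  field_simp
  linear_combination x ^ 2 * hsum - x * hprod

theorem tumorPotential_eventually_nhdsNE_zero_lt (hθ : 0 < θ) (ha : 0 < a) (hab : a < b)
    (hsum : θ * (a + b) = 1 - θ) (hprod : θ * (a * b) = γ - 1) :
    ∀ᶠ x in 𝓝[≠] (0 : ℝ), tumorPotential θ γ 0 < tumorPotential θ γ x := by
  refine eventually_nhdsNE_lt_of_hasDerivAt (by norm_num : (-2⁻¹ : ℝ) < 0) ha
    (fun x hx => hasDerivAt_tumorPotential hsum hprod (by linarith [hx.1])) ?_ ?_
  · rintro x ⟨hx1, hx2⟩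
    apply div_neg_of_neg_of_pos _ (by linarith)
    nlinarith [mul_pos (mul_pos (mul_pos hθ (neg_pos.2 hx2)) (sub_pos.2 (hx2.trans ha)))
      (sub_pos.2 (hx2.trans (ha.trans hab)))]
  · rintro x ⟨hx1, hx2⟩
    apply div_pos _ (by linarith)
    nlinarith [mul_pos (mul_pos (mul_pos hθ hx1) (sub_pos.2 hx2)) (sub_pos.2 (hx2.trans hab))]

theorem tumorPotential_eventually_nhdsNE_lt_left_root (hθ : 0 < θ) (ha : 0 < a) (hab : a < b)
    (hsum : θ * (a + b) = 1 - θ) (hprod : θ * (a * b) = γ - 1) :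
    ∀ᶠ x in 𝓝[≠] a, tumorPotential θ γ x < tumorPotential θ γ a := by
  refine eventually_nhdsNE_gt_of_hasDerivAt ha hab
    (fun x hx => hasDerivAt_tumorPotential hsum hprod (by linarith [hx.1])) ?_ ?_
  · rintro x ⟨hx1, hx2⟩
    apply div_pos _ (by linarith)
    nlinarith [mul_pos (mul_pos (mul_pos hθ hx1) (sub_pos.2 hx2)) (sub_pos.2 (hx2.trans hab))]
  · rintro x ⟨hx1, hx2⟩
    apply div_neg_of_neg_of_pos _ (by linarith)
    nlinarith [mul_pos (mul_pos (mul_pos hθ (ha.trans hx1)) (sub_pos.2 hx1)) (sub_pos.2 hx2)]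

theorem tumorPotential_eventually_nhdsNE_right_root_lt (hθ : 0 < θ) (ha : 0 < a) (hab : a < b)
    (hsum : θ * (a + b) = 1 - θ) (hprod : θ * (a * b) = γ - 1) :
    ∀ᶠ x in 𝓝[≠] b, tumorPotential θ γ b < tumorPotential θ γ x := by
  refine eventually_nhdsNE_lt_of_hasDerivAt hab (lt_add_one b)
    (fun x hx => hasDerivAt_tumorPotential hsum hprod (by linarith [hx.1])) ?_ ?_
  · rintro x ⟨hx1, hx2⟩
    apply div_neg_of_neg_of_pos _ (by linarith)
    nlinarith [mul_pos (mul_pos (mul_pos hθ (ha.trans hx1)) (sub_pos.2 hx1)) (sub_pos.2 hx2)]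
  · rintro x ⟨hx1, hx2⟩
    apply div_pos _ (by linarith)
    exact mul_pos (mul_pos (mul_pos hθ (by linarith)) (by linarith)) (sub_pos.2 hx1)

end Roots

/-- The potential `U(x) = -x²/2 + θx³/3 + γx - γ·ln(x+1)` of the tumor growth
model is bistable: it has a strict local minimum at the tumor-free state
`x₁ = 0`, a strict local maximum at the unstable state
`x₂ = (1-θ-√((1+θ)²-4γθ))/(2θ)`, and a strict local minimum at the stable
tumor state `x₃ = (1-θ+√((1+θ)²-4γθ))/(2θ)`. -/
theorem tumor_potential_bistable (θ γ : ℝ) (hθ0 : 0 < θ) (hθ1 : θ < 1)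
    (hγ1 : 1 < γ) (hγ2 : γ < (1 + θ) ^ 2 / (4 * θ)) :
    (∀ᶠ x in 𝓝[≠] (0 : ℝ),
        -(0:ℝ) ^ 2 / 2 + θ * 0 ^ 3 / 3 + γ * 0 - γ * Real.log (0 + 1) <
          -x ^ 2 / 2 + θ * x ^ 3 / 3 + γ * x - γ * Real.log (x + 1)) ∧
    (∀ᶠ x in 𝓝[≠] ((1 - θ - Real.sqrt ((1 + θ) ^ 2 - 4 * γ * θ)) / (2 * θ)),
        -x ^ 2 / 2 + θ * x ^ 3 / 3 + γ * x - γ * Real.log (x + 1) <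
          -((1 - θ - Real.sqrt ((1 + θ) ^ 2 - 4 * γ * θ)) / (2 * θ)) ^ 2 / 2 +
            θ * ((1 - θ - Real.sqrt ((1 + θ) ^ 2 - 4 * γ * θ)) / (2 * θ)) ^ 3 / 3 +
            γ * ((1 - θ - Real.sqrt ((1 + θ) ^ 2 - 4 * γ * θ)) / (2 * θ)) -
            γ * Real.log ((1 - θ - Real.sqrt ((1 + θ) ^ 2 - 4 * γ * θ)) / (2 * θ) + 1)) ∧
    (∀ᶠ x in 𝓝[≠] ((1 - θ + Real.sqrt ((1 + θ) ^ 2 - 4 * γ * θ)) / (2 * θ)),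
        -((1 - θ + Real.sqrt ((1 + θ) ^ 2 - 4 * γ * θ)) / (2 * θ)) ^ 2 / 2 +
            θ * ((1 - θ + Real.sqrt ((1 + θ) ^ 2 - 4 * γ * θ)) / (2 * θ)) ^ 3 / 3 +
            γ * ((1 - θ + Real.sqrt ((1 + θ) ^ 2 - 4 * γ * θ)) / (2 * θ)) -
            γ * Real.log ((1 - θ + Real.sqrt ((1 + θ) ^ 2 - 4 * γ * θ)) / (2 * θ) + 1) <
          -x ^ 2 / 2 + θ * x ^ 3 / 3 + γ * x - γ * Real.log (x + 1)) := by
  have hdisc : 0 < (1 + θ) ^ 2 - 4 * γ * θ := by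
    nlinarith [(lt_div_iff₀ (by positivity : (0:ℝ) < 4 * θ)).mp hγ2]
  set s := Real.sqrt ((1 + θ) ^ 2 - 4 * γ * θ)
  have hs_sq : s ^ 2 = (1 + θ) ^ 2 - 4 * γ * θ := Real.sq_sqrt hdisc.le
  have hs_pos : 0 < s := Real.sqrt_pos.mpr hdisc
  have hs_lt : s < 1 - θ := by nlinarith
  have ha : 0 < (1 - θ - s) / (2 * θ) := div_pos (by linarith) (by linarith)
  have hab : (1 - θ - s) / (2 * θ) < (1 - θ + s) / (2 * θ) := by gcongr; linarith
  have hsum : θ * ((1 - θ - s) / (2 * θ) + (1 - θ + s) / (2 * θ)) = 1 - θ := by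
    field_simp; ring
  have hprod : θ * ((1 - θ - s) / (2 * θ) * ((1 - θ + s) / (2 * θ))) = γ - 1 := by
    field_simp; linear_combination -hs_sq
  exact ⟨tumorPotential_eventually_nhdsNE_zero_lt hθ0 ha hab hsum hprod,
    tumorPotential_eventually_nhdsNE_lt_left_root hθ0 ha hab hsum hprod,
    tumorPotential_eventually_nhdsNE_right_root_lt hθ0 ha hab hsum hprod⟩
end

section
/- Fix real parameters θ and γ with 0 < θ < 1 and 1 < γ < (1+θ)²/(4θ), and set f(x) = x(1−θx) − γx/(x+1) and x₂ = (1−θ−√((1+θ)²−4γθ))/(2θ). Let x : ℝ → ℝ be a function such that for every t ≥ 0, x is differentiable at t with derivative x′(t) = f(x(t)). If x(0) ∈ [0, x₂), then x(t) → 0 as t → +∞; that is, any initial tumor density below the unstable state converges to the tumor-free state. -/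
/-! The rate factors as `f(y) = -y q(y) / (y + 1)` with `q(y) = θy² - (1 - θ)y + (γ - 1)`, and `q > 0`
left of its smaller root `x₂`. So `f < 0` on `(0, x₂)` and `f > 0` on `(-1, 0)`: the trajectory is
trapped in `[0, x(0)]` and nonincreasing, hence converges, and its limit must be a zero of `f` in
`[0, x₂)`, which is `0`. -/

open Filter Topology Set

theorem quadratic_pos_of_lt_smaller_root {a b c y : ℝ} (ha : 0 < a)
    (hy : y < (-b - √(discrim a b c)) / (2 * a)) : 0 < a * (y * y) + b * y + c := by
  have hroot : √(discrim a b c) < -(2 * a * y + b) := by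
    rw [lt_div_iff₀ (by positivity)] at hy
    linarith
  have hsq : discrim a b c < (2 * a * y + b) ^ 2 :=
    calc discrim a b c ≤ √(discrim a b c) ^ 2 := Real.sq_sqrt' ▸ le_max_left _ _
      _ < (2 * a * y + b) ^ 2 := by nlinarith [Real.sqrt_nonneg (discrim a b c)]
  have hsquare : 4 * a * (a * (y * y) + b * y + c) = (2 * a * y + b) ^ 2 - discrim a b c := by
    unfold discrim; ring
  exact pos_of_mul_pos_right (hsquare ▸ sub_pos.2 hsq) (by positivity)

section AutonomousODE

variable {f x : ℝ → ℝ}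

theorem le_of_hasDerivAt_of_neg_on_Ioo (hx : ∀ t, 0 ≤ t → HasDerivAt x (f (x t)) t) {c b : ℝ}
    (hcb : c < b) (hf : ∀ y ∈ Ioo c b, f y < 0) (h0 : x 0 ≤ c) {t : ℝ} (ht : 0 ≤ t) :
    x t ≤ c := by
  -- `x` cannot cross a level `u ∈ (c, b)` upwards since `f u < 0`; then let `u ↓ c`.
  have hle : ∀ u ∈ Ioo c b, x t ≤ u := fun u hu =>
    image_le_of_deriv_right_lt_deriv_boundary (B := fun _ => u) (B' := 0)
      (fun s hs => (hx s hs.1).continuousAt.continuousWithinAt)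
      (fun s hs => (hx s hs.1).hasDerivWithinAt) (h0.trans hu.1.le)
      (fun _ => hasDerivAt_const _ _) (fun s _ hs => hs ▸ hf u hu) ⟨ht, le_rfl⟩
  exact ge_of_tendsto (tendsto_nhdsWithin_of_tendsto_nhds tendsto_id)
    (eventually_of_mem (Ioo_mem_nhdsGT hcb) hle)

theorem le_of_hasDerivAt_of_pos_on_Ioo (hx : ∀ t, 0 ≤ t → HasDerivAt x (f (x t)) t) {a c : ℝ}
    (hac : a < c) (hf : ∀ y ∈ Ioo a c, 0 < f y) (h0 : c ≤ x 0) {t : ℝ} (ht : 0 ≤ t) :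
    c ≤ x t := by
  have hneg : ∀ t, 0 ≤ t → HasDerivAt (-x) ((fun y => -f (-y)) ((-x) t)) t := fun t ht => by
    simpa using (hx t ht).neg
  simpa using le_of_hasDerivAt_of_neg_on_Ioo (f := fun y => -f (-y)) (x := -x) hneg
    (neg_lt_neg hac) (fun y hy => neg_neg_of_pos (hf (-y) ⟨lt_neg_of_lt_neg hy.2, neg_lt.1 hy.1⟩))
    (neg_le_neg h0) ht

end AutonomousODE

theorem exists_tendsto_of_antitoneOn_Ici {x : ℝ → ℝ} {a : ℝ} (hx : AntitoneOn x (Ici a))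
    (hbdd : BddBelow (x '' Ici a)) : ∃ L, Tendsto x atTop (𝓝 L) :=
  ⟨_, tendsto_comp_val_Ici_atTop.1 <| tendsto_atTop_ciInf (fun s t hst => hx s.2 t.2 hst)
    (by rwa [image_eq_range] at hbdd)⟩

theorem eq_zero_of_tendsto_of_hasDerivAt {x g : ℝ → ℝ} {L a : ℝ}
    (hx : ∀ᶠ t in atTop, HasDerivAt x (g t) t) (hxL : Tendsto x atTop (𝓝 L))
    (hg : Tendsto g atTop (𝓝 a)) : a = 0 := by
  obtain ⟨T, hT⟩ := eventually_atTop.1 hx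
  have hmvt : ∀ t, T ≤ t → ∃ ξ ∈ Ioo t (t + 1), g ξ = x (t + 1) - x t := fun t ht => by
    obtain ⟨ξ, hξ, h⟩ := exists_hasDerivAt_eq_slope x g (lt_add_one t)
      (fun s hs => (hT s (ht.trans hs.1)).continuousAt.continuousWithinAt)
      (fun s hs => hT s (ht.trans hs.1.le))
    exact ⟨ξ, hξ, by simpa using h⟩
  choose! ξ hξ hgξ using hmvt
  have hξ_atTop : Tendsto ξ atTop atTop :=
    tendsto_atTop_mono' _ ((eventually_ge_atTop T).mono fun t ht => (hξ t ht).1.le) tendsto_id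
  have hincr : Tendsto (fun t => x (t + 1) - x t) atTop (𝓝 0) := by
    simpa using (hxL.comp (tendsto_atTop_add_const_right _ 1 tendsto_id)).sub hxL
  exact tendsto_nhds_unique ((hg.comp hξ_atTop).congr' <|
    (eventually_ge_atTop T).mono fun t ht => hgξ t ht) hincr

noncomputable def tumorGrowth (θ γ y : ℝ) : ℝ := y * (1 - θ * y) - γ * y / (y + 1)

noncomputable def unstableState (θ γ : ℝ) : ℝ := (1 - θ - √((1 + θ) ^ 2 - 4 * γ * θ)) / (2 * θ)

section TumorGrowth

variable {θ γ y : ℝ}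

theorem tumorGrowth_eq (hy : y + 1 ≠ 0) :
    tumorGrowth θ γ y = -(y * (θ * (y * y) + -(1 - θ) * y + (γ - 1))) / (y + 1) := by
  unfold tumorGrowth
  field_simp
  ring

theorem unstableState_eq_smaller_root :
    unstableState θ γ = (-(-(1 - θ)) - √(discrim θ (-(1 - θ)) (γ - 1))) / (2 * θ) := by
  rw [unstableState, neg_neg, discrim]
  ring_nf

theorem tumorGrowth_neg (hθ : 0 < θ) (hy0 : 0 < y) (hy : y < unstableState θ γ) :
    tumorGrowth θ γ y < 0 := by
  rw [unstableState_eq_smaller_root] at hy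
  rw [tumorGrowth_eq (by linarith)]
  exact div_neg_of_neg_of_pos
    (neg_neg_of_pos (mul_pos hy0 (quadratic_pos_of_lt_smaller_root hθ hy))) (by linarith)

theorem tumorGrowth_pos (hθ : 0 < θ) (hy1 : -1 < y) (hy0 : y < 0) (hy : y < unstableState θ γ) :
    0 < tumorGrowth θ γ y := by
  rw [unstableState_eq_smaller_root] at hy
  rw [tumorGrowth_eq (by linarith)]
  exact div_pos (neg_pos_of_neg (mul_neg_of_neg_of_pos hy0
    (quadratic_pos_of_lt_smaller_root hθ hy))) (by linarith)

theorem tumorGrowth_nonpos (hθ : 0 < θ) (hy0 : 0 ≤ y) (hy : y < unstableState θ γ) :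
    tumorGrowth θ γ y ≤ 0 := by
  rcases hy0.eq_or_lt with rfl | hy0
  · simp [tumorGrowth]
  · exact (tumorGrowth_neg hθ hy0 hy).le

theorem continuousAt_tumorGrowth (hy : y + 1 ≠ 0) : ContinuousAt (tumorGrowth θ γ) y := by
  unfold tumorGrowth
  fun_prop (disch := exact hy)

end TumorGrowth

theorem tumor_converges_to_tumor_free_general (θ γ : ℝ) (hθ0 : 0 < θ) (x : ℝ → ℝ)
    (hode : ∀ t : ℝ, 0 ≤ t →
      HasDerivAt x (x t * (1 - θ * x t) - γ * x t / (x t + 1)) t)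
    (hinit : x 0 ∈ Set.Ico (0 : ℝ)
      ((1 - θ - Real.sqrt ((1 + θ) ^ 2 - 4 * γ * θ)) / (2 * θ))) :
    Tendsto x atTop (𝓝 0) := by
  obtain ⟨hx0, hx0_lt⟩ : 0 ≤ x 0 ∧ x 0 < unstableState θ γ := hinit
  have hode' : ∀ t, 0 ≤ t → HasDerivAt x (tumorGrowth θ γ (x t)) t := hode
  have hmem : ∀ t, 0 ≤ t → x t ∈ Icc 0 (x 0) := fun t ht =>
    ⟨le_of_hasDerivAt_of_pos_on_Ioo hode' neg_one_lt_zero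
        (fun y hy => tumorGrowth_pos hθ0 hy.1 hy.2 ((hy.2.trans_le hx0).trans hx0_lt)) hx0 ht,
      le_of_hasDerivAt_of_neg_on_Ioo hode' hx0_lt
        (fun y hy => tumorGrowth_neg hθ0 (hx0.trans_lt hy.1) hy.2) le_rfl ht⟩
  have hanti : AntitoneOn x (Ici 0) := by
    refine antitoneOn_of_hasDerivWithinAt_nonpos (convex_Ici 0)
      (fun t ht => (hode' t ht).continuousAt.continuousWithinAt)
      (fun t ht => (hode' t (interior_subset ht)).hasDerivWithinAt) fun t ht => ?_
    have hxt := hmem t (interior_subset ht)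
    exact tumorGrowth_nonpos hθ0 hxt.1 (hxt.2.trans_lt hx0_lt)
  obtain ⟨L, hL⟩ := exists_tendsto_of_antitoneOn_Ici hanti
    ⟨0, by rintro _ ⟨t, ht, rfl⟩; exact (hmem t ht).1⟩
  have hL_mem : L ∈ Icc 0 (x 0) :=
    isClosed_Icc.mem_of_tendsto hL ((eventually_ge_atTop 0).mono hmem)
  have hfL : tumorGrowth θ γ L = 0 :=
    eq_zero_of_tendsto_of_hasDerivAt ((eventually_ge_atTop 0).mono hode') hL
      ((continuousAt_tumorGrowth (by linarith [hL_mem.1])).tendsto.comp hL)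
  rcases hL_mem.1.eq_or_lt with rfl | hL_pos
  · exact hL
  · exact absurd hfL (tumorGrowth_neg hθ0 hL_pos (hL_mem.2.trans_lt hx0_lt)).ne

/-- In the deterministic tumor growth model `dx/dt = f(x)` with
`f(x) = x(1-θx) - γx/(x+1)`, any solution starting at an initial tumor density
in `[0, x₂)` below the unstable state `x₂ = (1-θ-√((1+θ)²-4γθ))/(2θ)`
converges to the tumor-free state `0` as `t → +∞`. -/
theorem tumor_converges_to_tumor_free (θ γ : ℝ) (hθ0 : 0 < θ) (hθ1 : θ < 1)
    (hγ1 : 1 < γ) (hγ2 : γ < (1 + θ) ^ 2 / (4 * θ)) (x : ℝ → ℝ)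
    (hode : ∀ t : ℝ, 0 ≤ t →
      HasDerivAt x (x t * (1 - θ * x t) - γ * x t / (x t + 1)) t)
    (hinit : x 0 ∈ Set.Ico (0 : ℝ)
      ((1 - θ - Real.sqrt ((1 + θ) ^ 2 - 4 * γ * θ)) / (2 * θ))) :
    Tendsto x atTop (𝓝 0) :=
  tumor_converges_to_tumor_free_general θ γ hθ0 x hode hinit
end

section
/- Fix real parameters θ and γ with 0 < θ < 1 and 1 < γ < (1+θ)²/(4θ), and set f(x) = x(1−θx) − γx/(x+1), x₂ = (1−θ−√((1+θ)²−4γθ))/(2θ), and x₃ = (1−θ+√((1+θ)²−4γθ))/(2θ). Let x : ℝ → ℝ be a function such that for every t ≥ 0, x is differentiable at t with derivative x′(t) = f(x(t)). If x(0) ∈ (x₂, ∞), then x(t) → x₃ as t → +∞; that is, any initial tumor density above the unstable state converges to the stable tumor state. -/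
open Filter Topology

open Set


/-- If `F m > 0` and the solution starts at or above `m`, it stays at or above `m`. -/
lemma ode_stay_above (x F : ℝ → ℝ)
    (hode : ∀ t : ℝ, 0 ≤ t → HasDerivAt x (F (x t)) t)
    (m : ℝ) (hFm : 0 < F m) (h0 : m ≤ x 0) :
    ∀ t, 0 ≤ t → m ≤ x t := by
  intro t₁ ht₁
  by_contra hlt
  push_neg at hlt
  have hxc : ContinuousOn x (Icc 0 t₁) := fun t ht =>
    ((hode t ht.1).continuousAt).continuousWithinAt
  set S : Set ℝ := Icc 0 t₁ ∩ x ⁻¹' Ici m with hSdef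
  have hScl : IsClosed S := hxc.preimage_isClosed_of_isClosed isClosed_Icc isClosed_Ici
  have hScp : IsCompact S := isCompact_Icc.of_isClosed_subset hScl inter_subset_left
  have h0S : (0:ℝ) ∈ S := ⟨⟨le_refl 0, ht₁⟩, h0⟩
  set t₀ := sSup S with ht₀def
  have ht₀S : t₀ ∈ S := hScp.sSup_mem ⟨0, h0S⟩
  have ht₀0 : 0 ≤ t₀ := ht₀S.1.1
  have ht₀le : t₀ ≤ t₁ := ht₀S.1.2
  have hxt₀ : m ≤ x t₀ := ht₀S.2
  have ht₀lt : t₀ < t₁ := lt_of_le_of_ne ht₀le (by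
    intro h; rw [h] at hxt₀; exact absurd hxt₀ (not_le.2 hlt))
  have hnot : ∀ t ∈ Ioc t₀ t₁, x t < m := by
    intro t ht
    by_contra h
    push_neg at h
    have : t ∈ S := ⟨⟨le_trans ht₀0 ht.1.le, ht.2⟩, h⟩
    exact absurd (le_csSup hScp.bddAbove this) (not_le.2 ht.1)
  -- x t₀ = m
  have hxeq : x t₀ = m := by
    rcases eq_or_lt_of_le hxt₀ with h | h
    · exact h.symm
    · exfalso
      have hcont : ContinuousAt x t₀ := (hode t₀ ht₀0).continuousAt
      have hev : ∀ᶠ t in 𝓝 t₀, x t ∈ Ioi m := hcont (Ioi_mem_nhds h)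
      have hev' : ∀ᶠ t in 𝓝[>] t₀, x t ∈ Ioi m := hev.filter_mono nhdsWithin_le_nhds
      have hIoo : Ioo t₀ t₁ ∈ 𝓝[>] t₀ := Ioo_mem_nhdsGT_of_mem ⟨le_refl _, ht₀lt⟩
      have hIoo' : ∀ᶠ t in 𝓝[>] t₀, t ∈ Ioo t₀ t₁ := eventually_of_mem hIoo fun t ht => ht
      obtain ⟨t, ht1, ht2⟩ := (hev'.and hIoo').exists
      exact absurd ht1 (not_lt.2 (hnot t ⟨ht2.1, ht2.2.le⟩).le)
  -- derivative at t₀ is F m > 0, so x exceeds m just to the right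
  have hd : HasDerivAt x (F m) t₀ := hxeq ▸ hode t₀ ht₀0
  have hslope := hasDerivAt_iff_tendsto_slope.1 hd
  have hpos : ∀ᶠ t in 𝓝[≠] t₀, slope x t₀ t ∈ Ioi 0 := hslope (Ioi_mem_nhds hFm)
  have hle : 𝓝[>] t₀ ≤ 𝓝[≠] t₀ :=
    nhdsWithin_mono t₀ (fun t (ht : t ∈ Ioi t₀) => (ne_of_gt ht : t ≠ t₀))
  have hpos' : ∀ᶠ t in 𝓝[>] t₀, slope x t₀ t ∈ Ioi 0 := hpos.filter_mono hle
  have hIoo : Ioo t₀ t₁ ∈ 𝓝[>] t₀ := Ioo_mem_nhdsGT_of_mem ⟨le_refl _, ht₀lt⟩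
  have hIoo' : ∀ᶠ t in 𝓝[>] t₀, t ∈ Ioo t₀ t₁ := eventually_of_mem hIoo fun t ht => ht
  obtain ⟨t, ht1, ht2⟩ := (hpos'.and hIoo').exists
  have htpos : 0 < t - t₀ := sub_pos.2 ht2.1
  have : 0 < (x t - x t₀) / (t - t₀) := by
    have := ht1
    rwa [Set.mem_Ioi, slope_def_field] at this
  have hxgt : m < x t := by
    have := (div_pos_iff.1 this)
    rcases this with ⟨h1, _⟩ | ⟨_, h2⟩
    · linarith [hxeq ▸ h1]
    · linarith
  exact absurd hxgt (not_lt.2 (hnot t ⟨ht2.1, ht2.2.le⟩).le)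

/-- If `F < 0` above `b` and the solution starts at or below `b`, it stays at or below `b`. -/
lemma ode_stay_le (x F : ℝ → ℝ)
    (hode : ∀ t : ℝ, 0 ≤ t → HasDerivAt x (F (x t)) t)
    (b : ℝ) (hF : ∀ u, b < u → F u < 0) (h0 : x 0 ≤ b) :
    ∀ t, 0 ≤ t → x t ≤ b := by
  intro t₁ ht₁
  by_contra hlt
  push_neg at hlt
  have hxc : ContinuousOn x (Icc 0 t₁) := fun t ht =>
    ((hode t ht.1).continuousAt).continuousWithinAt
  set S : Set ℝ := Icc 0 t₁ ∩ x ⁻¹' Iic b with hSdef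
  have hScl : IsClosed S := hxc.preimage_isClosed_of_isClosed isClosed_Icc isClosed_Iic
  have hScp : IsCompact S := isCompact_Icc.of_isClosed_subset hScl inter_subset_left
  have h0S : (0:ℝ) ∈ S := ⟨⟨le_refl 0, ht₁⟩, h0⟩
  set t₀ := sSup S with ht₀def
  have ht₀S : t₀ ∈ S := hScp.sSup_mem ⟨0, h0S⟩
  have ht₀0 : 0 ≤ t₀ := ht₀S.1.1
  have ht₀le : t₀ ≤ t₁ := ht₀S.1.2
  have hxt₀ : x t₀ ≤ b := ht₀S.2
  have ht₀lt : t₀ < t₁ := lt_of_le_of_ne ht₀le (by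
    intro h; rw [h] at hxt₀; exact absurd hxt₀ (not_le.2 hlt))
  have hnot : ∀ t ∈ Ioc t₀ t₁, b < x t := by
    intro t ht
    by_contra h
    push_neg at h
    have : t ∈ S := ⟨⟨le_trans ht₀0 ht.1.le, ht.2⟩, h⟩
    exact absurd (le_csSup hScp.bddAbove this) (not_le.2 ht.1)
  have hanti : StrictAntiOn x (Icc t₀ t₁) := by
    apply strictAntiOn_of_deriv_neg (convex_Icc _ _)
      (hxc.mono (Icc_subset_Icc ht₀0 le_rfl))
    intro t ht
    rw [interior_Icc] at ht
    rw [(hode t (le_trans ht₀0 ht.1.le)).deriv]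
    exact hF _ (hnot t ⟨ht.1, ht.2.le⟩)
  have := hanti (left_mem_Icc.2 ht₀lt.le) (right_mem_Icc.2 ht₀lt.le) ht₀lt
  linarith

/-- If `F > 0` on `[m, b)`, the solution stays at or above `m`, and it starts at or
above `b`, then it stays at or above `b`. -/
lemma ode_stay_ge (x F : ℝ → ℝ)
    (hode : ∀ t : ℝ, 0 ≤ t → HasDerivAt x (F (x t)) t)
    (m b : ℝ) (hF : ∀ u, m ≤ u → u < b → 0 < F u)
    (hm : ∀ t, 0 ≤ t → m ≤ x t) (h0 : b ≤ x 0) :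
    ∀ t, 0 ≤ t → b ≤ x t := by
  intro t₁ ht₁
  by_contra hlt
  push_neg at hlt
  have hxc : ContinuousOn x (Icc 0 t₁) := fun t ht =>
    ((hode t ht.1).continuousAt).continuousWithinAt
  set S : Set ℝ := Icc 0 t₁ ∩ x ⁻¹' Ici b with hSdef
  have hScl : IsClosed S := hxc.preimage_isClosed_of_isClosed isClosed_Icc isClosed_Ici
  have hScp : IsCompact S := isCompact_Icc.of_isClosed_subset hScl inter_subset_left
  have h0S : (0:ℝ) ∈ S := ⟨⟨le_refl 0, ht₁⟩, h0⟩
  set t₀ := sSup S with ht₀def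
  have ht₀S : t₀ ∈ S := hScp.sSup_mem ⟨0, h0S⟩
  have ht₀0 : 0 ≤ t₀ := ht₀S.1.1
  have ht₀le : t₀ ≤ t₁ := ht₀S.1.2
  have hxt₀ : b ≤ x t₀ := ht₀S.2
  have ht₀lt : t₀ < t₁ := lt_of_le_of_ne ht₀le (by
    intro h; rw [h] at hxt₀; exact absurd hxt₀ (not_le.2 hlt))
  have hnot : ∀ t ∈ Ioc t₀ t₁, x t < b := by
    intro t ht
    by_contra h
    push_neg at h
    have : t ∈ S := ⟨⟨le_trans ht₀0 ht.1.le, ht.2⟩, h⟩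
    exact absurd (le_csSup hScp.bddAbove this) (not_le.2 ht.1)
  have hmono : StrictMonoOn x (Icc t₀ t₁) := by
    apply strictMonoOn_of_deriv_pos (convex_Icc _ _)
      (hxc.mono (Icc_subset_Icc ht₀0 le_rfl))
    intro t ht
    rw [interior_Icc] at ht
    have ht0 : 0 ≤ t := le_trans ht₀0 ht.1.le
    rw [(hode t ht0).deriv]
    exact hF _ (hm t ht0) (hnot t ⟨ht.1, ht.2.le⟩)
  have := hmono (left_mem_Icc.2 ht₀lt.le) (right_mem_Icc.2 ht₀lt.le) ht₀lt
  linarith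

/-- A solution trapped in `[m, b]` with `F > 0` on `[m, b)`, `F b = 0`, converges to `b`. -/
lemma ode_tendsto_sup (x F : ℝ → ℝ)
    (hode : ∀ t : ℝ, 0 ≤ t → HasDerivAt x (F (x t)) t)
    (m b : ℝ)
    (hFpos : ∀ u, m ≤ u → u < b → 0 < F u) (hFb : F b = 0)
    (hFc : ∀ u, m ≤ u → ContinuousAt F u)
    (hmem : ∀ t, 0 ≤ t → x t ∈ Icc m b) :
    Tendsto x atTop (𝓝 b) := by
  have hxc : ContinuousOn x (Ici 0) := fun t ht =>
    ((hode t ht).continuousAt).continuousWithinAt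
  have hF0 : ∀ u, m ≤ u → u ≤ b → 0 ≤ F u := by
    intro u h1 h2
    rcases lt_or_eq_of_le h2 with h | h
    · exact (hFpos u h1 h).le
    · rw [h, hFb]
  -- x is monotone on [0, ∞)
  have hmono : MonotoneOn x (Ici 0) := by
    apply monotoneOn_of_deriv_nonneg (convex_Ici 0) hxc
    · intro t ht
      rw [interior_Ici] at ht
      exact ((hode t ht.le).differentiableAt).differentiableWithinAt
    · intro t ht
      rw [interior_Ici] at ht
      rw [(hode t ht.le).deriv]
      exact hF0 _ (hmem t ht.le).1 (hmem t ht.le).2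
  set y : ℝ → ℝ := fun t => x (max t 0) with hydef
  have hy_mono : Monotone y := fun s t hst =>
    hmono (le_max_right s 0) (le_max_right t 0) (max_le_max hst le_rfl)
  have hy_mem : ∀ t, y t ∈ Icc m b := fun t => hmem _ (le_max_right t 0)
  have hbdd : BddAbove (range y) := ⟨b, by rintro _ ⟨t, rfl⟩; exact (hy_mem t).2⟩
  have htend : Tendsto y atTop (𝓝 (⨆ t, y t)) := tendsto_atTop_ciSup hy_mono hbdd
  set L := ⨆ t, y t with hLdef
  have hLb : L ≤ b := ciSup_le fun t => (hy_mem t).2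
  have hLm : m ≤ L := le_trans (hy_mem 0).1 (le_ciSup hbdd 0)
  have hyL : ∀ t, y t ≤ L := fun t => le_ciSup hbdd t
  -- show L = b
  have hLeq : L = b := by
    by_contra hne
    have hLlt : L < b := lt_of_le_of_ne hLb hne
    have hFL : 0 < F L := hFpos L hLm hLlt
    have hcomp : Tendsto (fun t => F (y t)) atTop (𝓝 (F L)) :=
      ((hFc L hLm).tendsto).comp htend
    have hev : ∀ᶠ t in atTop, F (y t) ∈ Ioi (F L / 2) :=
      hcomp (Ioi_mem_nhds (by linarith))
    obtain ⟨T, hT⟩ := eventually_atTop.1 (hev.and (eventually_ge_atTop (0:ℝ)))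
    have hT0 : 0 ≤ T := (hT T le_rfl).2
    -- derivative of x is at least F L / 2 past T, so x grows linearly: contradiction
    set z : ℝ → ℝ := fun t => x t - F L / 2 * t with hzdef
    have hz_mono : MonotoneOn z (Ici T) := by
      apply monotoneOn_of_deriv_nonneg (convex_Ici T)
      · apply ContinuousOn.sub (hxc.mono fun t (ht : T ≤ t) => le_trans hT0 ht)
        exact (continuous_const.mul continuous_id).continuousOn
      · intro t ht
        rw [interior_Ici] at ht
        have h0t : 0 ≤ t := le_trans hT0 ht.le
        exact (((hode t h0t).sub (((hasDerivAt_id t).const_mul (F L / 2)).congr_deriv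
          (mul_one _))).differentiableAt).differentiableWithinAt
      · intro t ht
        rw [interior_Ici] at ht
        have h0t : 0 ≤ t := le_trans hT0 ht.le
        have hd : HasDerivAt z (F (x t) - F L / 2) t :=
          (hode t h0t).sub (((hasDerivAt_id t).const_mul (F L / 2)).congr_deriv (mul_one _))
        rw [hd.deriv]
        have := (hT t ht.le).1
        rw [mem_Ioi] at this
        have hyt : y t = x t := by simp [hydef, max_eq_left h0t]
        rw [hyt] at this
        linarith
    -- pick a large time
    obtain ⟨t₂, ht₂def⟩ : ∃ t₂ : ℝ, t₂ = T + 2 * (b - m) / (F L) + 1 := ⟨_, rfl⟩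
    have ht₂T : T ≤ t₂ := by
      have : 0 ≤ 2 * (b - m) / (F L) := div_nonneg (by linarith) hFL.le
      linarith
    have := hz_mono (self_mem_Ici) (mem_Ici.2 ht₂T) ht₂T
    have hzz : x T - F L / 2 * T ≤ x t₂ - F L / 2 * t₂ := this
    have hxT : m ≤ x T := (hmem T hT0).1
    have hxt₂ : x t₂ ≤ b := (hmem t₂ (le_trans hT0 ht₂T)).2
    have hdiv : F L / 2 * (2 * (b - m) / F L) = b - m := by
      field_simp
    nlinarith [hFL]
  rw [hLeq] at htend
  apply htend.congr'
  filter_upwards [eventually_ge_atTop (0:ℝ)] with t ht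
  simp [hydef, max_eq_left ht]

/-- A solution trapped in `[b, ∞)` with `F < 0` above `b`, `F b = 0`, converges to `b`. -/
lemma ode_tendsto_inf (x F : ℝ → ℝ)
    (hode : ∀ t : ℝ, 0 ≤ t → HasDerivAt x (F (x t)) t)
    (b : ℝ)
    (hFneg : ∀ u, b < u → F u < 0) (hFb : F b = 0)
    (hFc : ∀ u, b ≤ u → ContinuousAt F u)
    (hmem : ∀ t, 0 ≤ t → b ≤ x t) :
    Tendsto x atTop (𝓝 b) := by
  have hxc : ContinuousOn x (Ici 0) := fun t ht =>
    ((hode t ht).continuousAt).continuousWithinAt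
  have hF0 : ∀ u, b ≤ u → F u ≤ 0 := by
    intro u h
    rcases lt_or_eq_of_le h with h | h
    · exact (hFneg u h).le
    · rw [← h, hFb]
  have hanti : AntitoneOn x (Ici 0) := by
    apply antitoneOn_of_deriv_nonpos (convex_Ici 0) hxc
    · intro t ht
      rw [interior_Ici] at ht
      exact ((hode t ht.le).differentiableAt).differentiableWithinAt
    · intro t ht
      rw [interior_Ici] at ht
      rw [(hode t ht.le).deriv]
      exact hF0 _ (hmem t ht.le)
  set y : ℝ → ℝ := fun t => x (max t 0) with hydef
  have hy_anti : Antitone y := fun s t hst =>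
    hanti (le_max_right s 0) (le_max_right t 0) (max_le_max hst le_rfl)
  have hy_mem : ∀ t, b ≤ y t := fun t => hmem _ (le_max_right t 0)
  have hbdd : BddBelow (range y) := ⟨b, by rintro _ ⟨t, rfl⟩; exact hy_mem t⟩
  have htend : Tendsto y atTop (𝓝 (⨅ t, y t)) := tendsto_atTop_ciInf hy_anti hbdd
  set L := ⨅ t, y t with hLdef
  have hLb : b ≤ L := le_ciInf fun t => hy_mem t
  have hLeq : L = b := by
    by_contra hne
    have hLgt : b < L := lt_of_le_of_ne hLb (Ne.symm hne)
    have hFL : F L < 0 := hFneg L hLgt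
    have hcomp : Tendsto (fun t => F (y t)) atTop (𝓝 (F L)) :=
      ((hFc L hLb).tendsto).comp htend
    have hev : ∀ᶠ t in atTop, F (y t) ∈ Iio (F L / 2) :=
      hcomp (Iio_mem_nhds (by linarith))
    obtain ⟨T, hT⟩ := eventually_atTop.1 (hev.and (eventually_ge_atTop (0:ℝ)))
    have hT0 : 0 ≤ T := (hT T le_rfl).2
    set z : ℝ → ℝ := fun t => x t - F L / 2 * t with hzdef
    have hz_anti : AntitoneOn z (Ici T) := by
      apply antitoneOn_of_deriv_nonpos (convex_Ici T)
      · apply ContinuousOn.sub (hxc.mono fun t (ht : T ≤ t) => le_trans hT0 ht)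
        exact (continuous_const.mul continuous_id).continuousOn
      · intro t ht
        rw [interior_Ici] at ht
        have h0t : 0 ≤ t := le_trans hT0 ht.le
        exact (((hode t h0t).sub (((hasDerivAt_id t).const_mul (F L / 2)).congr_deriv
          (mul_one _))).differentiableAt).differentiableWithinAt
      · intro t ht
        rw [interior_Ici] at ht
        have h0t : 0 ≤ t := le_trans hT0 ht.le
        have hd : HasDerivAt z (F (x t) - F L / 2) t :=
          (hode t h0t).sub (((hasDerivAt_id t).const_mul (F L / 2)).congr_deriv (mul_one _))
        rw [hd.deriv]
        have := (hT t ht.le).1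
        rw [mem_Iio] at this
        have hyt : y t = x t := by simp [hydef, max_eq_left h0t]
        rw [hyt] at this
        linarith
    obtain ⟨t₂, ht₂def⟩ : ∃ t₂ : ℝ, t₂ = T + 2 * (x T - b) / (-(F L)) + 1 := ⟨_, rfl⟩
    have hxTb : b ≤ x T := hmem T hT0
    have ht₂T : T ≤ t₂ := by
      have : 0 ≤ 2 * (x T - b) / (-(F L)) := div_nonneg (by linarith) (by linarith)
      linarith
    have hzz : x t₂ - F L / 2 * t₂ ≤ x T - F L / 2 * T :=
      hz_anti (self_mem_Ici) (mem_Ici.2 ht₂T) ht₂T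
    have hxt₂ : b ≤ x t₂ := hmem t₂ (le_trans hT0 ht₂T)
    have hdiv : F L / 2 * (2 * (x T - b) / (-(F L))) = -(x T - b) := by
      field_simp [hFL.ne]
    nlinarith [hFL]
  rw [hLeq] at htend
  apply htend.congr'
  filter_upwards [eventually_ge_atTop (0:ℝ)] with t ht
  simp [hydef, max_eq_left ht]

/-- In the deterministic tumor growth model `dx/dt = f(x)` with
`f(x) = x(1-θx) - γx/(x+1)`, any solution starting at an initial tumor density
in `(x₂, ∞)` above the unstable state `x₂ = (1-θ-√((1+θ)²-4γθ))/(2θ)`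
converges to the stable tumor state `x₃ = (1-θ+√((1+θ)²-4γθ))/(2θ)` as `t → +∞`. -/
theorem tumor_converges_to_stable_tumor_state (θ γ : ℝ) (hθ0 : 0 < θ) (hθ1 : θ < 1)
    (hγ1 : 1 < γ) (hγ2 : γ < (1 + θ) ^ 2 / (4 * θ)) (x : ℝ → ℝ)
    (hode : ∀ t : ℝ, 0 ≤ t →
      HasDerivAt x (x t * (1 - θ * x t) - γ * x t / (x t + 1)) t)
    (hinit : x 0 ∈ Set.Ioi ((1 - θ - Real.sqrt ((1 + θ) ^ 2 - 4 * γ * θ)) / (2 * θ))) :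
    Tendsto x atTop
      (𝓝 ((1 - θ + Real.sqrt ((1 + θ) ^ 2 - 4 * γ * θ)) / (2 * θ))) := by
  rw [Set.mem_Ioi] at hinit
  set s := Real.sqrt ((1 + θ) ^ 2 - 4 * γ * θ) with hsdef
  have hθ4 : (0:ℝ) < 4 * θ := by linarith
  have hD : 0 < (1 + θ) ^ 2 - 4 * γ * θ := by
    have := (lt_div_iff₀ hθ4).1 hγ2
    nlinarith
  have hs0 : 0 < s := Real.sqrt_pos.2 hD
  have hss : s ^ 2 = (1 + θ) ^ 2 - 4 * γ * θ := Real.sq_sqrt hD.le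
  have hs1 : s < 1 - θ := by nlinarith [hs0]
  set a := (1 - θ - s) / (2 * θ) with hadef
  set b := (1 - θ + s) / (2 * θ) with hbdef
  have h2θ : (0:ℝ) < 2 * θ := by linarith
  have ha0 : 0 < a := by rw [hadef]; exact div_pos (by linarith) h2θ
  have hab : a < b := by
    rw [hadef, hbdef]
    exact (div_lt_div_iff_of_pos_right h2θ).2 (by linarith)
  have hb0 : 0 < b := lt_trans ha0 hab
  set F : ℝ → ℝ := fun u => u * (1 - θ * u) - γ * u / (u + 1) with hFdef
  have hode' : ∀ t : ℝ, 0 ≤ t → HasDerivAt x (F (x t)) t := hode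
  have hsum : θ * (a + b) = 1 - θ := by rw [hadef, hbdef]; field_simp; ring
  have hprod : θ * (a * b) = γ - 1 := by
    rw [hadef, hbdef]
    field_simp
    nlinarith [hss]
  have key : ∀ u : ℝ, 0 < u + 1 → F u = θ * u * (u - a) * (b - u) / (u + 1) := by
    intro u hu
    have hne : u + 1 ≠ 0 := ne_of_gt hu
    rw [hFdef, eq_div_iff hne]
    have hcan : γ * u / (u + 1) * (u + 1) = γ * u := div_mul_cancel₀ _ hne
    have expand : (u * (1 - θ * u) - γ * u / (u + 1)) * (u + 1)
        = u * (1 - θ * u) * (u + 1) - γ * u := by rw [sub_mul, hcan]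
    rw [expand]
    linear_combination (-u^2) * hsum + u * hprod
  have hFb0 : F b = 0 := by
    rw [key b (by linarith)]
    simp
  have hFpos : ∀ u, a < u → u < b → 0 < F u := by
    intro u h1 h2
    have hu0 : 0 < u := lt_trans ha0 h1
    rw [key u (by linarith)]
    exact div_pos (mul_pos (mul_pos (mul_pos hθ0 hu0) (by linarith)) (by linarith)) (by linarith)
  have hFneg : ∀ u, b < u → F u < 0 := by
    intro u h1
    have hu0 : 0 < u := lt_trans hb0 h1
    rw [key u (by linarith)]
    apply div_neg_of_neg_of_pos _ (by linarith)
    apply mul_neg_of_pos_of_neg _ (by linarith)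
    exact mul_pos (mul_pos hθ0 hu0) (by linarith)
  have hFc : ∀ u : ℝ, 0 < u → ContinuousAt F u := by
    intro u hu
    have hne : u + 1 ≠ 0 := by positivity
    exact (continuousAt_id.mul (continuousAt_const.sub
      (continuousAt_const.mul continuousAt_id))).sub
      ((continuousAt_const.mul continuousAt_id).div
        (continuousAt_id.add continuousAt_const) hne)
  set m := min (x 0) ((a + b) / 2) with hmdef
  have ham : a < m := lt_min hinit (by linarith)
  have hmb : m < b := lt_of_le_of_lt (min_le_right _ _) (by linarith)
  have hm0 : 0 < m := lt_trans ha0 ham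
  have hmx0 : m ≤ x 0 := min_le_left _ _
  have hFpos' : ∀ u, m ≤ u → u < b → 0 < F u := fun u h1 h2 =>
    hFpos u (lt_of_lt_of_le ham h1) h2
  have hlow : ∀ t, 0 ≤ t → m ≤ x t :=
    ode_stay_above x F hode' m (hFpos m ham hmb) hmx0
  rcases le_or_gt (x 0) b with h0 | h0
  · have hup := ode_stay_le x F hode' b hFneg h0
    exact ode_tendsto_sup x F hode' m b hFpos' hFb0
      (fun u hu => hFc u (lt_of_lt_of_le hm0 hu))
      (fun t ht => ⟨hlow t ht, hup t ht⟩)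
  · have hge := ode_stay_ge x F hode' m b hFpos' hlow h0.le
    exact ode_tendsto_inf x F hode' b hFneg hFb0
      (fun u hu => hFc u (lt_of_lt_of_le hb0 hu)) hge
end

section
/- Let 0 < α < 2, let a < b be real numbers, let x ∈ (a, (a+b)/2), and set δ = x − a = min{x−a, b−x}. Let p : ℝ → ℝ be bounded and Borel measurable with p(z) = 1 for z ≤ a, p(z) = 0 for z ≥ b, and suppose p is twice continuously differentiable in a neighborhood of x. Then the function y ↦ [p(x+y) − p(x) − 1_{{|y|<δ}}·y·p′(x)]/|y|^{1+α} is Lebesgue integrable on ℝ\{0}, and ∫_{ℝ\{0}} [p(x+y) − p(x) − 1_{{|y|<δ}} y p′(x)]/|y|^{1+α} dy = −(1/α)[(x−a)^{−α} + (b−x)^{−α}]·p(x) + ∫_{x−a}^{b−x} (p(x+y) − p(x))/|y|^{1+α} dy + ∫_{a−x}^{x−a} (p(x+y) − p(x) − y p′(x))/|y|^{1+α} dy + 1/(α(x−a)^α). -/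
/-!
Split `ℝ` at `a - x`, `x - a` and `b - x`. On the two tails `p (x + y)` takes its constant exterior
value, so the integrand is a constant times `|y| ^ (-(1 + α))`, whose tail integrals are explicit
and produce the terms in `p x` and `1 / (α * (x - a) ^ α)`. Between `x - a` and `b - x` the kernel
is bounded. On `(a - x, x - a)` the second-order Taylor bound
`|p (x + y) - p x - y * p' x| ≤ C * y ^ 2` makes the integrand `O(|y| ^ (1 - α))`, which is
integrable because `α < 2`.
-/

open MeasureTheory Set intervalIntegral Filter Topology Asymptotics

open scoped Interval

section Decomposition

variable {E : Type*} [NormedAddCommGroup E] {μ : Measure ℝ} {f : ℝ → E}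

theorem integrable_of_integrableOn_Iic_of_intervalIntegrable_of_integrableOn_Ioi {u v : ℝ}
    (huv : u ≤ v) (hl : IntegrableOn f (Iic u) μ) (hm : IntervalIntegrable f μ u v)
    (hr : IntegrableOn f (Ioi v) μ) : Integrable f μ := by
  rw [← integrableOn_univ, ← Iic_union_Ioi (a := u), ← Ioc_union_Ioi_eq_Ioi huv]
  exact hl.union (((intervalIntegrable_iff_integrableOn_Ioc_of_le huv).1 hm).union hr)

theorem integral_eq_Iic_add_intervalIntegral_add_intervalIntegral_add_Ioi [NormedSpace ℝ E]
    (hf : Integrable f μ) (u v w : ℝ) :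
    ∫ y, f y ∂μ = (∫ y in Iic u, f y ∂μ) + (∫ y in u..v, f y ∂μ) + (∫ y in v..w, f y ∂μ) +
      ∫ y in Ioi w, f y ∂μ := by
  rw [← integral_Iic_add_Ioi hf.integrableOn hf.integrableOn,
    ← integral_interval_add_Ioi (a := u) (b := v) hf.integrableOn hf.integrableOn,
    ← integral_interval_add_Ioi (a := v) (b := w) hf.integrableOn hf.integrableOn]
  abel

end Decomposition

section PowerKernel

variable {α r : ℝ}

theorem div_abs_rpow_eq_mul_rpow_neg (k s : ℝ) {y : ℝ} (hy : 0 < y) :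
    k / |y| ^ s = k * y ^ (-s) := by
  rw [abs_of_pos hy, Real.rpow_neg hy.le, div_eq_mul_inv]

theorem integrableOn_Ioi_div_abs_rpow_one_add (k : ℝ) (hα : 0 < α) (hr : 0 < r) :
    IntegrableOn (fun y : ℝ => k / |y| ^ (1 + α)) (Ioi r) :=
  IntegrableOn.congr_fun ((integrableOn_Ioi_rpow_of_lt (by linarith) hr).const_mul k)
    (fun _ hy => (div_abs_rpow_eq_mul_rpow_neg k _ (hr.trans hy)).symm) measurableSet_Ioi

theorem integral_Ioi_div_abs_rpow_one_add (k : ℝ) (hα : 0 < α) (hr : 0 < r) :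
    ∫ y in Ioi r, k / |y| ^ (1 + α) = k / (α * r ^ α) := by
  rw [setIntegral_congr_fun measurableSet_Ioi
      (fun _ hy => div_abs_rpow_eq_mul_rpow_neg k _ (hr.trans hy)),
    MeasureTheory.integral_const_mul, integral_Ioi_rpow_of_lt (by linarith) hr,
    show -(1 + α) + 1 = -α by ring, Real.rpow_neg hr.le]
  field_simp

theorem integrableOn_Iic_neg_div_abs_rpow_one_add (k : ℝ) (hα : 0 < α) (hr : 0 < r) :
    IntegrableOn (fun y : ℝ => k / |y| ^ (1 + α)) (Iic (-r)) := by
  have h : IntegrableOn (fun y : ℝ => k / |y| ^ (1 + α)) (Ici (-(-r))) := by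
    rw [neg_neg, integrableOn_Ici_iff_integrableOn_Ioi (by finiteness)]
    exact integrableOn_Ioi_div_abs_rpow_one_add k hα hr
  simpa only [abs_neg] using h.comp_neg_Iic

theorem integral_Iic_neg_div_abs_rpow_one_add (k : ℝ) (hα : 0 < α) (hr : 0 < r) :
    ∫ y in Iic (-r), k / |y| ^ (1 + α) = k / (α * r ^ α) := by
  rw [← integral_comp_neg_Ioi, ← integral_Ioi_div_abs_rpow_one_add k hα hr]
  simp only [abs_neg]

end PowerKernel

theorem intervalIntegrable_abs_rpow {s : ℝ} (hs : -1 < s) (u v : ℝ) :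
    IntervalIntegrable (fun y : ℝ => |y| ^ s) volume u v := by
  have h₀ : ∀ c, 0 ≤ c → IntervalIntegrable (fun y : ℝ => |y| ^ s) volume 0 c := fun c hc =>
    (intervalIntegrable_rpow' hs).congr_uIoo fun y hy => by
      rw [uIoo_of_le hc] at hy
      rw [abs_of_pos hy.1]
  have h : ∀ c, IntervalIntegrable (fun y : ℝ => |y| ^ s) volume 0 c := by
    intro c
    rcases le_total 0 c with hc | hc
    · exact h₀ c hc
    · rw [IntervalIntegrable.iff_comp_neg]
      simpa only [abs_neg, neg_zero] using h₀ (-c) (by linarith)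
  exact (h u).symm.trans (h v)

theorem isBigO_sub_sub_mul_deriv {f : ℝ → ℝ} {x : ℝ}
    (hf : ∀ᶠ t in 𝓝 x, DifferentiableAt ℝ f t) (hf' : DifferentiableAt ℝ (deriv f) x) :
    (fun y => f (x + y) - f x - y * deriv f x) =O[𝓝 0] fun y => y ^ 2 := by
  obtain ⟨C, hC0, hC⟩ := hf'.isBigO_sub.exists_pos
  obtain ⟨r, hr, hball⟩ := Metric.eventually_nhds_iff_ball.1 (hf.and hC.bound)
  refine IsBigO.of_bound C (Metric.eventually_nhds_iff_ball.2 ⟨r, hr, fun y hy => ?_⟩)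
  rw [mem_ball_zero_iff, Real.norm_eq_abs] at hy
  have hsub : Metric.closedBall x |y| ⊆ Metric.ball x r := Metric.closedBall_subset_ball hy
  -- mean value inequality for `t ↦ f t - t * f' x`, whose derivative is `O(|t - x|)`
  have hderiv : ∀ t ∈ Metric.closedBall x |y|, HasDerivWithinAt (fun t => f t - t * deriv f x)
      (deriv f t - deriv f x) (Metric.closedBall x |y|) t := fun t ht => by
    have h : HasDerivAt (fun t => f t - t * deriv f x) (deriv f t - 1 * deriv f x) t :=
      (hball t (hsub ht)).1.hasDerivAt.sub ((hasDerivAt_id' t).mul_const (deriv f x))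
    rw [one_mul] at h
    exact h.hasDerivWithinAt
  have hbound : ∀ t ∈ Metric.closedBall x |y|, ‖deriv f t - deriv f x‖ ≤ C * |y| := fun t ht =>
    (hball t (hsub ht)).2.trans
      (by rw [← dist_eq_norm]; gcongr; exact Metric.mem_closedBall.1 ht)
  have h := (convex_closedBall x |y|).norm_image_sub_le_of_norm_hasDerivWithin_le hderiv hbound
    (Metric.mem_closedBall_self (abs_nonneg y))
    (show x + y ∈ Metric.closedBall x |y| by simp [dist_eq_norm])
  calc ‖f (x + y) - f x - y * deriv f x‖
      = ‖f (x + y) - (x + y) * deriv f x - (f x - x * deriv f x)‖ := by ring_nf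
    _ ≤ C * |y| * ‖x + y - x‖ := h
    _ = C * ‖y ^ 2‖ := by simp [sq, mul_assoc]

theorem ContDiffAt.isBigO_sub_sub_mul_deriv {f : ℝ → ℝ} {x : ℝ} (hf : ContDiffAt ℝ 2 f x) :
    (fun y => f (x + y) - f x - y * deriv f x) =O[𝓝 0] fun y => y ^ 2 :=
  _root_.isBigO_sub_sub_mul_deriv ((hf.eventually (by simp)).mono fun _ ht =>
    ht.differentiableAt (by simp)) ((hf.derivWithin (m := 1) (by norm_num)).differentiableAt
      (by simp))

theorem exists_abs_le_mul_sq_of_isBigO {g : ℝ → ℝ} {s : Set ℝ} {K : ℝ}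
    (hg : g =O[𝓝 0] fun y => y ^ 2) (hK : ∀ y ∈ s, |g y| ≤ K) :
    ∃ C, ∀ y ∈ s, |g y| ≤ C * y ^ 2 := by
  obtain ⟨C, hC⟩ := hg.bound
  obtain ⟨ε, hε, hball⟩ := Metric.eventually_nhds_iff_ball.1 hC
  refine ⟨max C (K / ε ^ 2), fun y hy => ?_⟩
  rcases lt_or_ge |y| ε with hyε | hyε
  · have h := hball y (by simpa using hyε)
    simp only [Real.norm_eq_abs, abs_pow, sq_abs] at h
    exact h.trans (by gcongr; exact le_max_left _ _)
  · have hK0 : 0 ≤ K := (abs_nonneg _).trans (hK y hy)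
    calc |g y| ≤ K := hK y hy
      _ ≤ K / ε ^ 2 * y ^ 2 := by
        rw [div_mul_eq_mul_div, le_div_iff₀ (by positivity), ← sq_abs y]
        gcongr
      _ ≤ max C (K / ε ^ 2) * y ^ 2 := by gcongr; exact le_max_right _ _

theorem abs_div_abs_rpow_le_of_abs_le_mul_sq {g : ℝ → ℝ} {α C y : ℝ} (hy : |g y| ≤ C * y ^ 2) :
    |g y / |y| ^ (1 + α)| ≤ |C| * |y| ^ (1 - α) := by
  rcases eq_or_ne y 0 with rfl | hy0
  · have hg0 : g 0 = 0 := abs_nonpos_iff.1 (by simpa using hy)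
    simp only [hg0, zero_div, abs_zero]
    positivity
  have hy' : 0 < |y| := abs_pos.2 hy0
  rw [abs_div, abs_of_pos (Real.rpow_pos_of_pos hy' _), div_le_iff₀ (Real.rpow_pos_of_pos hy' _),
    mul_assoc, ← Real.rpow_add hy', show 1 - α + (1 + α) = (2 : ℕ) by norm_num, Real.rpow_natCast,
    sq_abs]
  exact hy.trans (by gcongr; exact le_abs_self C)

theorem IntervalIntegrable.div_abs_rpow_of_abs_le_mul_sq {g : ℝ → ℝ} {α C u v : ℝ}
    (hg : AEStronglyMeasurable g volume) (hα : α < 2) (hC : ∀ y ∈ [[u, v]], |g y| ≤ C * y ^ 2) :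
    IntervalIntegrable (fun y => g y / |y| ^ (1 + α)) volume u v := by
  refine ((intervalIntegrable_abs_rpow (by linarith : -1 < 1 - α) u v).const_mul |C|).mono_fun'
    (hg.div₀ (measurable_abs.pow_const _).aestronglyMeasurable).restrict ?_
  filter_upwards [ae_restrict_mem measurableSet_uIoc] with y hy
  exact abs_div_abs_rpow_le_of_abs_le_mul_sq (hC y (uIoc_subset_uIcc hy))

theorem IntervalIntegrable.div_abs_rpow {g : ℝ → ℝ} {u v : ℝ}
    (hg : IntervalIntegrable g volume u v) (h0 : (0 : ℝ) ∉ [[u, v]]) (β : ℝ) :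
    IntervalIntegrable (fun y => g y / |y| ^ β) volume u v := by
  simp_rw [div_eq_mul_inv]
  refine hg.mul_continuousOn (ContinuousOn.inv₀ ?_ fun y hy => ?_)
  · exact continuousOn_id.abs.rpow_const fun y hy =>
      Or.inl (abs_ne_zero.2 (ne_of_mem_of_not_mem hy h0))
  · exact (Real.rpow_pos_of_pos (abs_pos.2 (ne_of_mem_of_not_mem hy h0)) β).ne'

section EscapeProbability

variable {p : ℝ → ℝ} {α x : ℝ}

theorem intervalIntegrable_sub_sub_mul_deriv_div_abs_rpow {M : ℝ} (hp : Measurable p)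
    (hM : ∀ z, |p z| ≤ M) (hp₂ : ContDiffAt ℝ 2 p x) (hα : α < 2) (δ : ℝ) :
    IntervalIntegrable (fun y => (p (x + y) - p x - y * deriv p x) / |y| ^ (1 + α)) volume
      (-δ) δ := by
  have hK : ∀ y ∈ [[-δ, δ]], |p (x + y) - p x - y * deriv p x| ≤ M + M + |δ| * |deriv p x| :=
    fun y hy => by
    have hyδ : |y| ≤ |δ| := by
      rcases mem_uIcc.1 hy with h | h <;> rw [abs_le] <;> constructor <;>
        linarith [le_abs_self δ, neg_abs_le δ]
    have hyc : |y * deriv p x| ≤ |δ| * |deriv p x| := by rw [abs_mul]; gcongr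
    linarith [abs_sub (p (x + y) - p x) (y * deriv p x), abs_sub (p (x + y)) (p x),
      hM (x + y), hM x]
  obtain ⟨C, hC⟩ := exists_abs_le_mul_sq_of_isBigO hp₂.isBigO_sub_sub_mul_deriv hK
  exact IntervalIntegrable.div_abs_rpow_of_abs_le_mul_sq
    (by fun_prop : Measurable _).aestronglyMeasurable hα hC

theorem intervalIntegrable_sub_div_abs_rpow {M u v : ℝ} (hp : Measurable p) (hM : ∀ z, |p z| ≤ M)
    (h0 : (0 : ℝ) ∉ [[u, v]]) (β : ℝ) :
    IntervalIntegrable (fun y => (p (x + y) - p x) / |y| ^ β) volume u v := by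
  refine IntervalIntegrable.div_abs_rpow ?_ h0 β
  refine (intervalIntegrable_const (c := M + M)).mono_fun'
    (by fun_prop : Measurable _).aestronglyMeasurable (ae_of_all _ fun y => ?_)
  linarith [abs_sub (p (x + y)) (p x), hM (x + y), hM x, Real.norm_eq_abs (p (x + y) - p x)]

noncomputable def truncatedLevyIntegrand (p : ℝ → ℝ) (α x δ y : ℝ) : ℝ :=
  (p (x + y) - p x - (if |y| < δ then y * deriv p x else 0)) / |y| ^ (1 + α)

theorem truncatedLevyIntegrand_eqOn_uIoo_neg {δ : ℝ} (hδ : 0 ≤ δ) :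
    EqOn (truncatedLevyIntegrand p α x δ)
      (fun y => (p (x + y) - p x - y * deriv p x) / |y| ^ (1 + α)) (uIoo (-δ) δ) := by
  intro y hy
  rw [uIoo_of_le (by linarith), mem_Ioo, ← abs_lt] at hy
  simp only [truncatedLevyIntegrand, hy, if_true]

theorem truncatedLevyIntegrand_eqOn_uIoo {δ R : ℝ} (hδR : δ ≤ R) :
    EqOn (truncatedLevyIntegrand p α x δ) (fun y => (p (x + y) - p x) / |y| ^ (1 + α))
      (uIoo δ R) := by
  intro y hy
  rw [uIoo_of_le hδR] at hy
  have hn : ¬ |y| < δ := not_lt.2 (hy.1.le.trans (le_abs_self y))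
  simp only [truncatedLevyIntegrand, hn, if_false, sub_zero]

theorem truncatedLevyIntegrand_eqOn_Iic {a : ℝ} (hpa : ∀ z ≤ a, p z = 1) :
    EqOn (truncatedLevyIntegrand p α x (x - a)) (fun y => (1 - p x) / |y| ^ (1 + α))
      (Iic (-(x - a))) := by
  intro y (hy : y ≤ -(x - a))
  have hn : ¬ |y| < x - a := not_lt.2 (by linarith [neg_abs_le y])
  simp only [truncatedLevyIntegrand, hpa (x + y) (by linarith), hn, if_false, sub_zero]

theorem truncatedLevyIntegrand_eqOn_Ioi {a b : ℝ} (hpb : ∀ z, b ≤ z → p z = 0)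
    (hδR : x - a ≤ b - x) :
    EqOn (truncatedLevyIntegrand p α x (x - a)) (fun y => -p x / |y| ^ (1 + α)) (Ioi (b - x)) := by
  intro y (hy : b - x < y)
  have hn : ¬ |y| < x - a := not_lt.2 (by linarith [le_abs_self y])
  simp only [truncatedLevyIntegrand, hpb (x + y) (by linarith), hn, if_false, sub_zero, zero_sub]

end EscapeProbability

theorem escape_probability_symmetric_part_left_general (α a b x : ℝ)
    (hα0 : 0 < α) (hα2 : α < 2)
    (hx : x ∈ Ioo a ((a + b) / 2)) (p : ℝ → ℝ) (hmeas : Measurable p)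
    (hbdd : ∃ M : ℝ, ∀ z : ℝ, |p z| ≤ M)
    (hpa : ∀ z : ℝ, z ≤ a → p z = 1) (hpb : ∀ z : ℝ, b ≤ z → p z = 0)
    (hsmooth : ContDiffAt ℝ 2 p x) :
    IntegrableOn (fun y : ℝ =>
        (p (x + y) - p x - (if |y| < x - a then y * deriv p x else 0)) / |y| ^ (1 + α))
      {(0 : ℝ)}ᶜ ∧
    (∫ y in {(0 : ℝ)}ᶜ,
        (p (x + y) - p x - (if |y| < x - a then y * deriv p x else 0)) / |y| ^ (1 + α)) =
      -(1 / α) * ((x - a) ^ (-α) + (b - x) ^ (-α)) * p x +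
        (∫ y in (x - a)..(b - x), (p (x + y) - p x) / |y| ^ (1 + α)) +
        (∫ y in (a - x)..(x - a), (p (x + y) - p x - y * deriv p x) / |y| ^ (1 + α)) +
        1 / (α * (x - a) ^ α) := by
  obtain ⟨M, hM⟩ := hbdd
  have hδ : 0 < x - a := by linarith [hx.1]
  have hδR : x - a < b - x := by linarith [hx.2]
  have h_left := truncatedLevyIntegrand_eqOn_Iic (α := α) (x := x) hpa
  have h_center := truncatedLevyIntegrand_eqOn_uIoo_neg (p := p) (α := α) (x := x) hδ.le
  have h_mid := truncatedLevyIntegrand_eqOn_uIoo (p := p) (α := α) (x := x) hδR.le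
  have h_right := truncatedLevyIntegrand_eqOn_Ioi (α := α) hpb hδR.le
  have h0 : (0 : ℝ) ∉ [[x - a, b - x]] := by
    rw [uIcc_of_le hδR.le]
    exact fun h => hδ.not_ge h.1
  have i_left := (integrableOn_Iic_neg_div_abs_rpow_one_add _ hα0 hδ).congr_fun h_left.symm
    measurableSet_Iic
  have i_center := (intervalIntegrable_sub_sub_mul_deriv_div_abs_rpow hmeas hM hsmooth hα2
    (x - a)).congr_uIoo h_center.symm
  have i_mid := (intervalIntegrable_sub_div_abs_rpow hmeas hM h0 _).congr_uIoo h_mid.symm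
  have i_right := (integrableOn_Ioi_div_abs_rpow_one_add _ hα0 (hδ.trans hδR)).congr_fun
    h_right.symm measurableSet_Ioi
  have hfi : Integrable (truncatedLevyIntegrand p α x (x - a)) :=
    integrable_of_integrableOn_Iic_of_intervalIntegrable_of_integrableOn_Ioi (by linarith) i_left
      (i_center.trans i_mid) i_right
  refine ⟨by rwa [IntegrableOn, restrict_compl_singleton], ?_⟩
  rw [← neg_sub x a, restrict_compl_singleton]
  change ∫ y, truncatedLevyIntegrand p α x (x - a) y = _
  rw [integral_eq_Iic_add_intervalIntegral_add_intervalIntegral_add_Ioi hfi (-(x - a)) (x - a)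
      (b - x), setIntegral_congr_fun measurableSet_Iic h_left, integral_congr_uIoo h_center,
    integral_congr_uIoo h_mid, setIntegral_congr_fun measurableSet_Ioi h_right,
    integral_Iic_neg_div_abs_rpow_one_add _ hα0 hδ,
    integral_Ioi_div_abs_rpow_one_add _ hα0 (hδ.trans hδR), Real.rpow_neg hδ.le,
    Real.rpow_neg (by linarith : (0 : ℝ) ≤ b - x)]
  ring

/-- Rewriting the symmetric part of the nonlocal generator for the escape
probability on `D = (a,b)`, in the case `a < x < (a+b)/2` (so the truncation
radius is `δ = x - a`): with exterior values `p = 1` on `(-∞,a]` and `p = 0`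
on `[b,∞)`, the integrand `[p(x+y) - p(x) - 1_{|y|<δ} y p'(x)]/|y|^{1+α}` is
integrable on `ℝ \ {0}` and its integral equals
`-(1/α)[(x-a)^{-α} + (b-x)^{-α}] p(x) + ∫_{x-a}^{b-x} (p(x+y)-p(x))/|y|^{1+α} dy
 + ∫_{a-x}^{x-a} (p(x+y)-p(x)-y p'(x))/|y|^{1+α} dy + 1/(α(x-a)^α)`. -/
theorem escape_probability_symmetric_part_left (α a b x : ℝ)
    (hα0 : 0 < α) (hα2 : α < 2) (hab : a < b)
    (hx : x ∈ Ioo a ((a + b) / 2)) (p : ℝ → ℝ) (hmeas : Measurable p)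
    (hbdd : ∃ M : ℝ, ∀ z : ℝ, |p z| ≤ M)
    (hpa : ∀ z : ℝ, z ≤ a → p z = 1) (hpb : ∀ z : ℝ, b ≤ z → p z = 0)
    (hsmooth : ContDiffAt ℝ 2 p x) :
    IntegrableOn (fun y : ℝ =>
        (p (x + y) - p x - (if |y| < x - a then y * deriv p x else 0)) / |y| ^ (1 + α))
      {(0 : ℝ)}ᶜ ∧
    (∫ y in {(0 : ℝ)}ᶜ,
        (p (x + y) - p x - (if |y| < x - a then y * deriv p x else 0)) / |y| ^ (1 + α)) =
      -(1 / α) * ((x - a) ^ (-α) + (b - x) ^ (-α)) * p x +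
        (∫ y in (x - a)..(b - x), (p (x + y) - p x) / |y| ^ (1 + α)) +
        (∫ y in (a - x)..(x - a), (p (x + y) - p x - y * deriv p x) / |y| ^ (1 + α)) +
        1 / (α * (x - a) ^ α) :=
  escape_probability_symmetric_part_left_general α a b x hα0 hα2 hx p hmeas hbdd hpa hpb hsmooth
end

section
/- Let 0 < α < 2, let a < b be real numbers, let x ∈ [(a+b)/2, b), and set δ = b − x = min{x−a, b−x}. Let p : ℝ → ℝ be bounded and Borel measurable with p(z) = 1 for z ≤ a, p(z) = 0 for z ≥ b, and suppose p is twice continuously differentiable in a neighborhood of x. Then the function y ↦ [p(x+y) − p(x) − 1_{{|y|<δ}}·y·p′(x)]/|y|^{1+α} is Lebesgue integrable on ℝ\{0}, and ∫_{ℝ\{0}} [p(x+y) − p(x) − 1_{{|y|<δ}} y p′(x)]/|y|^{1+α} dy = −(1/α)[(x−a)^{−α} + (b−x)^{−α}]·p(x) + ∫_{a−x}^{x−b} (p(x+y) − p(x))/|y|^{1+α} dy + ∫_{x−b}^{b−x} (p(x+y) − p(x) − y p′(x))/|y|^{1+α} dy + 1/(α(x−a)^α). -/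
open MeasureTheory Set intervalIntegral

/-!
Near `y = 0` the drift term `y p'(x)` is switched on, so by Taylor's theorem the numerator is
`O(y²)` and the integrand is `O(|y|^{1-α})`, integrable as `α < 2`; away from `0` the numerator is
bounded and the integrand is `O(|y|^{-1-α})`, integrable as `α > 0`. Splitting `ℝ` at
`a - x ≤ x - b < b - x`, the exterior values make the integrand `(1 - p x) / |y|^{1+α}` on
`(-∞, a - x]` and `-p x / |y|^{1+α}` on `(b - x, ∞)`; their integrals `(1 - p x)(x - a)^{-α}/α`
and `-p x (b - x)^{-α}/α` are the explicit terms of the formula.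
-/

theorem ContDiffAt.exists_abs_sub_sub_mul_deriv_le_sq {f : ℝ → ℝ} {x : ℝ}
    (hf : ContDiffAt ℝ 2 f x) :
    ∃ ε > 0, ∃ C, ∀ y, |y| < ε → |f (x + y) - f x - y * deriv f x| ≤ C * y ^ 2 := by
  obtain ⟨K, t, ht, hK⟩ := (hf.derivWithin (m := 1) (by norm_num)).exists_lipschitzOnWith
  have hdiff : ∀ᶠ z in nhds x, DifferentiableAt ℝ f z :=
    (hf.eventually (by simp)).mono fun z hz => hz.differentiableAt (by norm_num)
  obtain ⟨ε, hε, hball⟩ := Metric.mem_nhds_iff.mp (Filter.inter_mem ht hdiff)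
  refine ⟨ε, hε, K, fun y hy => ?_⟩
  have hsub : Metric.closedBall x |y| ⊆ Metric.ball x ε := Metric.closedBall_subset_ball hy
  have hderiv : ∀ z ∈ Metric.closedBall x |y|, HasDerivWithinAt (fun z => f z - z * deriv f x)
      (deriv f z - deriv f x) (Metric.closedBall x |y|) z := fun z hz =>
    ((hball (hsub hz)).2.hasDerivAt.sub (hasDerivAt_mul_const _)).hasDerivWithinAt
  have hbound : ∀ z ∈ Metric.closedBall x |y|, ‖deriv f z - deriv f x‖ ≤ K * |y| := fun z hz =>
    (hK.norm_sub_le (hball (hsub hz)).1 (hball (Metric.mem_ball_self hε)).1).trans <|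
      mul_le_mul_of_nonneg_left (by rw [← dist_eq_norm]; exact hz) K.2
  have := (convex_closedBall x |y|).norm_image_sub_le_of_norm_hasDerivWithin_le hderiv hbound
    (Metric.mem_closedBall_self (abs_nonneg y)) (show x + y ∈ _ by simp)
  calc |f (x + y) - f x - y * deriv f x|
      = ‖(f (x + y) - (x + y) * deriv f x) - (f x - x * deriv f x)‖ := by
        rw [Real.norm_eq_abs]; ring_nf
    _ ≤ K * |y| * ‖x + y - x‖ := this
    _ = K * y ^ 2 := by simp [mul_assoc, ← sq]

theorem integrableOn_compl_ball_abs_rpow {ε s : ℝ} (hε : 0 < ε) (hs : s < -1) :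
    IntegrableOn (fun y : ℝ => |y| ^ s) (Metric.ball 0 ε)ᶜ := by
  have hright : IntegrableOn (fun y : ℝ => |y| ^ s) (Ici ε) :=
    (integrableOn_Ici_iff_integrableOn_Ioi (μ := volume)).mpr <|
      (integrableOn_Ioi_rpow_of_lt hs hε).congr_fun
        (fun y hy => by rw [abs_of_pos (hε.trans hy)]) measurableSet_Ioi
  have hleft : IntegrableOn (fun y : ℝ => |y| ^ s) (Iic (-ε)) := by
    rw [← (Measure.measurePreserving_neg (volume : Measure ℝ)).integrableOn_comp_preimage
      (Homeomorph.neg ℝ).measurableEmbedding]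
    simpa [Function.comp_def] using hright
  refine (hleft.union hright).mono_set fun y hy => ?_
  simp only [mem_compl_iff, Metric.mem_ball, dist_zero_right, Real.norm_eq_abs, not_lt,
    le_abs'] at hy
  exact hy

theorem integrableOn_compl_ball_div_abs_rpow_of_abs_le {g : ℝ → ℝ} {K ε α : ℝ} (hε : 0 < ε)
    (hα : 0 < α) (hg : Measurable g) (hbound : ∀ y, |g y| ≤ K) :
    IntegrableOn (fun y => g y / |y| ^ (1 + α)) (Metric.ball 0 ε)ᶜ := by
  refine Integrable.mono' ((integrableOn_compl_ball_abs_rpow hε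
    (s := -(1 + α)) (by linarith)).const_mul K)
    (hg.div (measurable_abs.pow_const _)).aestronglyMeasurable.restrict (ae_of_all _ fun y => ?_)
  rw [Real.norm_eq_abs, abs_div, abs_of_nonneg (Real.rpow_nonneg (abs_nonneg y) _),
    div_eq_mul_inv, ← Real.rpow_neg (abs_nonneg y)]
  gcongr
  exact hbound y

theorem integrableOn_ball_div_abs_rpow_of_abs_le_mul_sq {g : ℝ → ℝ} {C ε α : ℝ} (hα : α < 2)
    (hg : Measurable g)
    (hbound : ∀ y ∈ Metric.ball (0 : ℝ) ε, |g y| ≤ C * y ^ 2) :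
    IntegrableOn (fun y => g y / |y| ^ (1 + α)) (Metric.ball 0 ε) := by
  have hne : ∀ᵐ y : ℝ ∂volume.restrict (Metric.ball 0 ε), y ≠ 0 :=
    ae_restrict_of_ae (by simp [ae_iff, measure_singleton])
  refine integrableOn_ball_of_norm_le_rpow (C := C) (α := α - 1) (by simp) (by simp; linarith) ?_
    (hg.div (measurable_abs.pow_const _)).aestronglyMeasurable
  filter_upwards [ae_restrict_mem measurableSet_ball, hne] with y hy hy0
  have hpos : 0 < |y| := abs_pos.mpr hy0
  calc ‖g y / |y| ^ (1 + α)‖ = |g y| / |y| ^ (1 + α) := by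
        rw [Real.norm_eq_abs, abs_div, abs_of_pos (Real.rpow_pos_of_pos hpos _)]
    _ ≤ C * |y| ^ (2 : ℝ) / |y| ^ (1 + α) := by
        gcongr
        simpa [sq_abs] using hbound y hy
    _ = C * ‖y‖ ^ (-(α - 1)) := by
        rw [mul_div_assoc, ← Real.rpow_sub hpos, Real.norm_eq_abs]; ring_nf

theorem integrable_compensated_div_abs_rpow {p : ℝ → ℝ} {x δ α : ℝ} (hmeas : Measurable p)
    (hbdd : ∃ M, ∀ z, |p z| ≤ M) (hp : ContDiffAt ℝ 2 p x) (hδ : 0 < δ) (hα0 : 0 < α)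
    (hα2 : α < 2) :
    Integrable fun y =>
      (p (x + y) - p x - (if |y| < δ then y * deriv p x else 0)) / |y| ^ (1 + α) := by
  obtain ⟨M, hM⟩ := hbdd
  obtain ⟨ε, hε, C, hC⟩ := hp.exists_abs_sub_sub_mul_deriv_le_sq
  set g : ℝ → ℝ := fun y => p (x + y) - p x - (if |y| < δ then y * deriv p x else 0)
  have hg : Measurable g :=
    ((hmeas.comp (measurable_const_add x)).sub measurable_const).sub <|
      Measurable.ite (measurableSet_lt measurable_abs measurable_const)
        (measurable_id.mul_const _) measurable_const
  have hg_bound : ∀ y, |g y| ≤ M + M + δ * |deriv p x| := fun y => by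
    have hjump : |(if |y| < δ then y * deriv p x else 0)| ≤ δ * |deriv p x| := by
      split_ifs with hy
      · rw [abs_mul]; gcongr
      · rw [abs_zero]; positivity
    calc |g y| ≤ |p (x + y) - p x| + |(if |y| < δ then y * deriv p x else 0)| := abs_sub _ _
      _ ≤ M + M + δ * |deriv p x| :=
          add_le_add ((abs_sub _ _).trans (add_le_add (hM _) (hM _))) hjump
  have hg_taylor : ∀ y ∈ Metric.ball (0 : ℝ) (min ε δ), |g y| ≤ C * y ^ 2 := fun y hy => by
    rw [mem_ball_zero_iff, Real.norm_eq_abs, lt_min_iff] at hy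
    simpa only [g, if_pos hy.2] using hC y hy.1
  rw [← integrableOn_univ, ← union_compl_self (Metric.ball 0 (min ε δ))]
  exact (integrableOn_ball_div_abs_rpow_of_abs_le_mul_sq hα2 hg hg_taylor).union
    (integrableOn_compl_ball_div_abs_rpow_of_abs_le (lt_min hε hδ) hα0 hg hg_bound)

theorem integral_Ioi_div_abs_rpow (k : ℝ) {c α : ℝ} (hc : 0 < c) (hα : 0 < α) :
    ∫ y in Ioi c, k / |y| ^ (1 + α) = k * c ^ (-α) / α := by
  have hpow : ∀ y ∈ Ioi c, k / |y| ^ (1 + α) = k * y ^ (-(1 + α)) := fun y hy => by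
    rw [abs_of_pos (hc.trans hy), Real.rpow_neg (hc.trans hy).le, div_eq_mul_inv]
  rw [setIntegral_congr_fun measurableSet_Ioi hpow, MeasureTheory.integral_const_mul,
    integral_Ioi_rpow_of_lt (by linarith) hc, show -(1 + α) + 1 = -α by ring]
  field_simp

theorem integral_Iic_neg_div_abs_rpow (k : ℝ) {c α : ℝ} (hc : 0 < c) (hα : 0 < α) :
    ∫ y in Iic (-c), k / |y| ^ (1 + α) = k * c ^ (-α) / α := by
  rw [← integral_Ioi_div_abs_rpow k hc hα,
    ← integral_comp_neg_Ioi c fun y => k / |y| ^ (1 + α)]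
  simp only [abs_neg]

theorem MeasureTheory.Integrable.integral_eq_Iic_add_intervalIntegral_add_add_Ioi {f : ℝ → ℝ}
    (hf : Integrable f) (a b c : ℝ) :
    ∫ y, f y = (∫ y in Iic a, f y) + (∫ y in a..b, f y) + (∫ y in b..c, f y) +
      ∫ y in Ioi c, f y := by
  rw [← integral_Iic_add_Ioi (b := a) hf.integrableOn hf.integrableOn,
    ← integral_interval_add_Ioi (a := a) (b := b) hf.integrableOn hf.integrableOn,
    ← integral_interval_add_Ioi (a := b) (b := c) hf.integrableOn hf.integrableOn]
  ring

theorem escape_probability_symmetric_part_right_general (α a b x : ℝ)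
    (hα0 : 0 < α) (hα2 : α < 2)
    (hx : x ∈ Ico ((a + b) / 2) b) (p : ℝ → ℝ) (hmeas : Measurable p)
    (hbdd : ∃ M : ℝ, ∀ z : ℝ, |p z| ≤ M)
    (hpa : ∀ z : ℝ, z ≤ a → p z = 1) (hpb : ∀ z : ℝ, b ≤ z → p z = 0)
    (hsmooth : ContDiffAt ℝ 2 p x) :
    IntegrableOn (fun y : ℝ =>
        (p (x + y) - p x - (if |y| < b - x then y * deriv p x else 0)) / |y| ^ (1 + α))
      {(0 : ℝ)}ᶜ ∧
    (∫ y in {(0 : ℝ)}ᶜ,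
        (p (x + y) - p x - (if |y| < b - x then y * deriv p x else 0)) / |y| ^ (1 + α)) =
      -(1 / α) * ((x - a) ^ (-α) + (b - x) ^ (-α)) * p x +
        (∫ y in (a - x)..(x - b), (p (x + y) - p x) / |y| ^ (1 + α)) +
        (∫ y in (x - b)..(b - x), (p (x + y) - p x - y * deriv p x) / |y| ^ (1 + α)) +
        1 / (α * (x - a) ^ α) := by
  obtain ⟨hmid, hxb⟩ := hx
  have hδ : 0 < b - x := sub_pos.mpr hxb
  set f := fun y : ℝ =>
    (p (x + y) - p x - (if |y| < b - x then y * deriv p x else 0)) / |y| ^ (1 + α)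
  have hf : Integrable f := integrable_compensated_div_abs_rpow hmeas hbdd hsmooth hδ hα0 hα2
  refine ⟨hf.integrableOn, ?_⟩
  have hleft : ∫ y in Iic (a - x), f y = (1 - p x) * (x - a) ^ (-α) / α := by
    rw [show a - x = -(x - a) by ring, ← integral_Iic_neg_div_abs_rpow _ (by linarith) hα0]
    refine setIntegral_congr_fun measurableSet_Iic fun y (hy : y ≤ -(x - a)) => ?_
    have hjump : ¬ |y| < b - x := by rw [abs_of_neg (by linarith)]; linarith
    simp only [f, hpa (x + y) (by linarith), hjump, if_false, sub_zero]
  have hright : ∫ y in Ioi (b - x), f y = -p x * (b - x) ^ (-α) / α := by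
    rw [← integral_Ioi_div_abs_rpow _ hδ hα0]
    refine setIntegral_congr_fun measurableSet_Ioi fun y (hy : b - x < y) => ?_
    have hjump : ¬ |y| < b - x := by rw [abs_of_pos (by linarith)]; linarith
    simp only [f, hpb (x + y) (by linarith), hjump, if_false, sub_zero, zero_sub]
  have houter : ∫ y in (a - x)..(x - b), f y =
      ∫ y in (a - x)..(x - b), (p (x + y) - p x) / |y| ^ (1 + α) := by
    refine integral_congr fun y hy => ?_
    rw [uIcc_of_le (by linarith)] at hy
    have hjump : ¬ |y| < b - x := by rw [abs_of_neg (by linarith [hy.2])]; linarith [hy.2]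
    simp only [f, hjump, if_false, sub_zero]
  have hinner : ∫ y in (x - b)..(b - x), f y =
      ∫ y in (x - b)..(b - x), (p (x + y) - p x - y * deriv p x) / |y| ^ (1 + α) := by
    -- the integrands differ only at `y = b - x`
    rw [integral_of_le (by linarith), integral_of_le (by linarith),
      integral_Ioc_eq_integral_Ioo, integral_Ioc_eq_integral_Ioo]
    refine setIntegral_congr_fun measurableSet_Ioo fun y hy => ?_
    have hjump : |y| < b - x := abs_lt.mpr ⟨by linarith [hy.1], hy.2⟩
    simp only [f, hjump, if_true]
  rw [restrict_compl_singleton, hf.integral_eq_Iic_add_intervalIntegral_add_add_Ioi (a - x)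
    (x - b) (b - x), hleft, houter, hinner, hright, Real.rpow_neg (by linarith : 0 ≤ x - a)]
  ring

/-- Rewriting the symmetric part of the nonlocal generator for the escape
probability on `D = (a,b)`, in the case `(a+b)/2 ≤ x < b` (so the truncation
radius is `δ = b - x`): with exterior values `p = 1` on `(-∞,a]` and `p = 0`
on `[b,∞)`, the integrand `[p(x+y) - p(x) - 1_{|y|<δ} y p'(x)]/|y|^{1+α}` is
integrable on `ℝ \ {0}` and its integral equals
`-(1/α)[(x-a)^{-α} + (b-x)^{-α}] p(x) + ∫_{a-x}^{x-b} (p(x+y)-p(x))/|y|^{1+α} dy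
 + ∫_{x-b}^{b-x} (p(x+y)-p(x)-y p'(x))/|y|^{1+α} dy + 1/(α(x-a)^α)`. -/
theorem escape_probability_symmetric_part_right (α a b x : ℝ)
    (hα0 : 0 < α) (hα2 : α < 2) (hab : a < b)
    (hx : x ∈ Ico ((a + b) / 2) b) (p : ℝ → ℝ) (hmeas : Measurable p)
    (hbdd : ∃ M : ℝ, ∀ z : ℝ, |p z| ≤ M)
    (hpa : ∀ z : ℝ, z ≤ a → p z = 1) (hpb : ∀ z : ℝ, b ≤ z → p z = 0)
    (hsmooth : ContDiffAt ℝ 2 p x) :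
    IntegrableOn (fun y : ℝ =>
        (p (x + y) - p x - (if |y| < b - x then y * deriv p x else 0)) / |y| ^ (1 + α))
      {(0 : ℝ)}ᶜ ∧
    (∫ y in {(0 : ℝ)}ᶜ,
        (p (x + y) - p x - (if |y| < b - x then y * deriv p x else 0)) / |y| ^ (1 + α)) =
      -(1 / α) * ((x - a) ^ (-α) + (b - x) ^ (-α)) * p x +
        (∫ y in (a - x)..(x - b), (p (x + y) - p x) / |y| ^ (1 + α)) +
        (∫ y in (x - b)..(b - x), (p (x + y) - p x - y * deriv p x) / |y| ^ (1 + α)) +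
        1 / (α * (x - a) ^ α) :=
  escape_probability_symmetric_part_right_general α a b x hα0 hα2 hx p hmeas hbdd hpa hpb hsmooth
end
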